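/- For 1 < p < ∞, every strong Auerbach basis vector of l^n_p equals, up to a signed permutation of components, either (1, 0, ..., 0) or (2^{-1/p}, 2^{-1/p}, 0, ..., 0). (It suffices to treat p ≠ 2; for p = 2 interpret via orthogonality.) -/

import Mathlib

/-!
Fix `i`. The span of the other basis vectors is an isometric copy of `l^{n-1}_p`, and for `p ≠ 2`
the strict parallelogram inequality for `|·|^p` forces the images `x_l` of its unit vectors to be
disjointly supported. Birkhoff-James orthogonality of `v_i` to `x_l` gives the first-order
condition `∑ |v_i|^(p-2) v_i x_l = 0`, so `v_i` vanishes on every singleton support; since `n - 1`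
disjoint nonempty supports fit into `n` coordinates, `v_i` is supported on a single coordinate or
on a support `{a, b}` of some `x_l`. In the second case some `v_k`, `k ≠ i`, is nonzero at `a`, and
in the isometric copy of `l^2_p` spanned by `v_i` and `v_k` the two first-order conditions force
`|v_i a| = |v_i b|`.
-/

open Finset

/-- The `p`-norm on `ℝⁿ`. -/
noncomputable def pnorm (p : ℝ) {n : ℕ} (x : Fin n → ℝ) : ℝ :=
  (∑ j, |x j| ^ p) ^ (1 / p)

/-- `v` is an Auerbach basis of `l^n_p`. -/
def IsAuerbach (p : ℝ) {n : ℕ} (v : Fin n → Fin n → ℝ) : Prop :=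
  LinearIndependent ℝ v ∧ ∀ i, pnorm p (v i) = 1 ∧
    ∀ w ∈ Submodule.span ℝ (v '' {j | j ≠ i}), pnorm p (v i) ≤ pnorm p (v i + w)

/-- `v` is a strong Auerbach basis of `l^n_p`: an Auerbach basis such that the span of any
subset `S` of the basis vectors is isometrically isomorphic to `l^{|S|}_p`. -/
def IsStrongAuerbach (p : ℝ) {n : ℕ} (v : Fin n → Fin n → ℝ) : Prop :=
  IsAuerbach p v ∧ ∀ S : Finset (Fin n),
    ∃ g : (Fin S.card → ℝ) →ₗ[ℝ] (Fin n → ℝ),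
      (∀ c, pnorm p (g c) = pnorm p c) ∧
      LinearMap.range g = Submodule.span ℝ (v '' ↑S)

lemma abs_rpow_eq_sq_rpow (p x : ℝ) : |x| ^ p = (x ^ 2) ^ (p / 2) := by
  rw [← sq_abs, ← Real.rpow_natCast, ← Real.rpow_mul (abs_nonneg x)]
  ring_nf

section Parallelogram

variable {p : ℝ}

noncomputable def parallelogramDefect (p u w : ℝ) : ℝ :=
  |u + w| ^ p + |u - w| ^ p - 2 * |u| ^ p - 2 * |w| ^ p

lemma parallelogramDefect_of_mul_eq_zero (hp : p ≠ 0) {u w : ℝ} (h : u * w = 0) :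
    parallelogramDefect p u w = 0 := by
  rcases mul_eq_zero.1 h with rfl | rfl <;>
    simp [parallelogramDefect, Real.zero_rpow hp] <;> ring

/-- Both cases come from `|u ± w|^p = ((u ± w)^2)^(p/2)`: Jensen for `t ↦ t^(p/2)` at the two
distinct points `(u ± w)^2`, whose mean is `u^2 + w^2`, and super- or subadditivity of `t^(p/2)`. -/
lemma mul_parallelogramDefect_pos (hp : 0 < p) (hp2 : p ≠ 2) {u w : ℝ} (hu : u ≠ 0)
    (hw : w ≠ 0) : 0 < (p - 2) * parallelogramDefect p u w := by
  have hne : (u + w) ^ 2 ≠ (u - w) ^ 2 := fun h => mul_ne_zero hu hw (by nlinarith)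
  have hmean : (1 / 2 : ℝ) • (u + w) ^ 2 + (1 / 2 : ℝ) • (u - w) ^ 2 = u ^ 2 + w ^ 2 := by
    simp only [smul_eq_mul]; ring
  have hsq : ∀ x : ℝ, x ^ 2 ∈ Set.Ici (0 : ℝ) := fun x => sq_nonneg x
  have hhalf : (0 : ℝ) < 1 / 2 := by norm_num
  unfold parallelogramDefect
  simp only [abs_rpow_eq_sq_rpow p]
  rcases hp2.lt_or_gt with hlt | hgt
  · have hjensen := (Real.strictConcaveOn_rpow (p := p / 2) (by linarith) (by linarith)).2
      (hsq (u + w)) (hsq (u - w)) hne hhalf hhalf (by norm_num)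
    have hsub := Real.rpow_add_le_add_rpow (sq_nonneg u) (sq_nonneg w) (p := p / 2)
      (by linarith) (by linarith)
    rw [hmean] at hjensen
    simp only [smul_eq_mul] at hjensen
    nlinarith
  · have hjensen := (strictConvexOn_rpow (p := p / 2) (by linarith)).2
      (hsq (u + w)) (hsq (u - w)) hne hhalf hhalf (by norm_num)
    have hsuper := Real.add_rpow_le_rpow_add (sq_nonneg u) (sq_nonneg w) (p := p / 2)
      (by linarith)
    rw [hmean] at hjensen
    simp only [smul_eq_mul] at hjensen
    nlinarith

/-- Two vectors spanning an isometric copy of `l^2_p`, `p ≠ 2`, are disjointly supported: summed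
over the coordinates, the parallelogram defects vanish, but each one has the sign of `p - 2`
and is nonzero where both vectors are. -/
lemma mul_eq_zero_of_forall_sum_abs_rpow_eq {ι : Type*} [Fintype ι] (hp : 0 < p) (hp2 : p ≠ 2)
    {x y : ι → ℝ} (h : ∀ a b : ℝ, ∑ j, |a * x j + b * y j| ^ p = |a| ^ p + |b| ^ p) (j : ι) :
    x j * y j = 0 := by
  by_contra hj
  have hsum : ∑ j, (p - 2) * parallelogramDefect p (x j) (y j) = 0 := by
    have h11 := h 1 1
    have h1m := h 1 (-1)
    have h10 := h 1 0
    have h01 := h 0 1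
    simp only [one_mul, zero_mul, add_zero, zero_add, neg_one_mul, ← sub_eq_add_neg, abs_one,
      abs_neg, abs_zero, Real.one_rpow, Real.zero_rpow hp.ne'] at h11 h1m h10 h01
    simp only [parallelogramDefect, ← Finset.mul_sum, Finset.sum_sub_distrib,
      Finset.sum_add_distrib, h11, h1m, h10, h01]
    ring
  refine (Finset.sum_pos' (fun i _ => ?_) ⟨j, Finset.mem_univ j, ?_⟩).ne' hsum
  · by_cases hi : x i * y i = 0
    · rw [parallelogramDefect_of_mul_eq_zero hp.ne' hi, mul_zero]
    · exact (mul_parallelogramDefect_pos hp hp2 (left_ne_zero_of_mul hi)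
        (right_ne_zero_of_mul hi)).le
  · exact mul_parallelogramDefect_pos hp hp2 (left_ne_zero_of_mul hj) (right_ne_zero_of_mul hj)

end Parallelogram

/-- The derivative of `|x|^p` is `p |x|^(p-2) x`. -/
lemma sum_abs_rpow_mul_mul_eq_zero {ι : Type*} [Fintype ι] {p : ℝ} (hp : 1 < p) {u y : ι → ℝ}
    (hmin : ∀ t : ℝ, ∑ j, |u j| ^ p ≤ ∑ j, |u j + t * y j| ^ p) :
    ∑ j, |u j| ^ (p - 2) * u j * y j = 0 := by
  have hderiv : HasDerivAt (fun t : ℝ => ∑ j, |u j + t * y j| ^ p)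
      (∑ j, p * |u j| ^ (p - 2) * u j * y j) 0 := by
    refine HasDerivAt.fun_sum fun j _ => ?_
    have hlin : HasDerivAt (fun t : ℝ => u j + t * y j) (y j) 0 := by
      simpa using ((hasDerivAt_id (0 : ℝ)).mul_const (y j)).const_add (u j)
    simpa [Function.comp_def] using (hasDerivAt_abs_rpow (u j + 0 * y j) hp).comp 0 hlin
  have hlocal : IsLocalMin (fun t : ℝ => ∑ j, |u j + t * y j| ^ p) 0 :=
    Filter.Eventually.of_forall fun t => by simpa using hmin t
  have hzero := hlocal.hasDerivAt_eq_zero hderiv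
  simp only [mul_assoc, ← Finset.mul_sum] at hzero
  simpa [mul_assoc, (by linarith : p ≠ 0)] using hzero

section TwoDim

variable {p : ℝ}

lemma eq_of_rpow_sub_two_mul_self_mul_eq {a b c d : ℝ} (hp : p ≠ 0) (hp2 : p ≠ 2)
    (ha : 0 < a) (hb : 0 < b) (hc : 0 < c) (hd : 0 < d)
    (h₁ : a ^ (p - 2) * a * c = b ^ (p - 2) * b * d)
    (h₂ : c ^ (p - 2) * c * a = d ^ (p - 2) * d * b) : a = b := by
  have hlog : ∀ {x y : ℝ}, 0 < x → 0 < y →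
      Real.log (x ^ (p - 2) * x * y) = (p - 1) * Real.log x + Real.log y := by
    intro x y hx hy
    rw [Real.log_mul (by positivity) hy.ne', Real.log_mul (by positivity) hx.ne',
      Real.log_rpow hx]
    ring
  have l₁ := congrArg Real.log h₁
  have l₂ := congrArg Real.log h₂
  rw [hlog ha hc, hlog hb hd] at l₁
  rw [hlog hc ha, hlog hd hb] at l₂
  have hsum : Real.log a + Real.log c = Real.log b + Real.log d :=
    mul_left_cancel₀ hp (by linear_combination l₁ + l₂)
  have hdiff : Real.log a - Real.log c = Real.log b - Real.log d :=
    mul_left_cancel₀ (sub_ne_zero.2 hp2) (by linear_combination l₁ - l₂)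
  exact Real.log_injOn_pos ha hb (by linarith)

lemma abs_rpow_mul_abs_mul_abs_eq {x y z w : ℝ}
    (h : |x| ^ (p - 2) * x * y + |z| ^ (p - 2) * z * w = 0) :
    |x| ^ (p - 2) * |x| * |y| = |z| ^ (p - 2) * |z| * |w| := by
  have := congrArg abs (eq_neg_of_add_eq_zero_left h)
  simpa only [abs_neg, abs_mul, abs_of_nonneg (Real.rpow_nonneg (abs_nonneg _) _)] using this

lemma eq_zero_of_abs_rpow_mul_mul_eq_zero {x y : ℝ} (hx : x ≠ 0)
    (h : |x| ^ (p - 2) * x * y = 0) : y = 0 :=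
  (mul_eq_zero.1 h).resolve_left
    (mul_ne_zero (Real.rpow_pos_of_pos (abs_pos.2 hx) _).ne' hx)

lemma abs_eq_two_rpow_of_rpow_add_rpow_eq_one (hp : p ≠ 0) {a : ℝ} (h : |a| ^ p + |a| ^ p = 1) :
    |a| = 2 ^ (-(1 / p)) := by
  rw [← Real.rpow_rpow_inv (abs_nonneg a) hp, show |a| ^ p = 2⁻¹ by linarith,
    Real.inv_rpow zero_le_two, ← Real.rpow_neg zero_le_two, one_div]

/-- Here `c, c'` are mutually Birkhoff-James orthogonal unit vectors of `l^2_p`. Multiplying and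
dividing the absolute values of the two first-order conditions gives `|c₀ c'₀| = |c₁ c'₁|` and
`|c₀ / c'₀| = |c₁ / c'₁|` (the latter because `p ≠ 2`), hence `|c₀| = |c₁|`. -/
lemma eq_zero_or_abs_eq_of_fin_two (hp : p ≠ 0) (hp2 : p ≠ 2) {c c' : Fin 2 → ℝ}
    (hc : ∑ j, |c j| ^ p = 1) (hc' : ∑ j, |c' j| ^ p = 1)
    (h : ∑ j, |c j| ^ (p - 2) * c j * c' j = 0) (h' : ∑ j, |c' j| ^ (p - 2) * c' j * c j = 0) :
    (c 0 = 0 ∧ c' 1 = 0) ∨ (c 1 = 0 ∧ c' 0 = 0) ∨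
      (|c 0| = 2 ^ (-(1 / p)) ∧ |c 1| = 2 ^ (-(1 / p))) := by
  simp only [Fin.sum_univ_two] at hc hc' h h'
  have hunit : ∀ {x y : ℝ}, |x| ^ p + |y| ^ p = 1 → x = 0 → y ≠ 0 := by
    rintro x y hxy rfl rfl
    simp [Real.zero_rpow hp] at hxy
  by_cases h0 : c 0 = 0
  · refine Or.inl ⟨h0, eq_zero_of_abs_rpow_mul_mul_eq_zero (p := p) (hunit hc h0) ?_⟩
    simpa [h0] using h
  by_cases h1 : c 1 = 0
  · refine Or.inr (Or.inl ⟨h1, eq_zero_of_abs_rpow_mul_mul_eq_zero (p := p) h0 ?_⟩)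
    simpa [h1] using h
  have h0' : c' 0 ≠ 0 := fun h0' =>
    hunit hc' h0' (eq_zero_of_abs_rpow_mul_mul_eq_zero h1 (by simpa [h0'] using h))
  have h1' : c' 1 ≠ 0 := fun h1' =>
    hunit (by rwa [add_comm] at hc') h1' (eq_zero_of_abs_rpow_mul_mul_eq_zero h0
      (by simpa [h1'] using h))
  have habs : |c 0| = |c 1| :=
    eq_of_rpow_sub_two_mul_self_mul_eq hp hp2 (abs_pos.2 h0) (abs_pos.2 h1) (abs_pos.2 h0')
      (abs_pos.2 h1') (abs_rpow_mul_abs_mul_abs_eq h) (abs_rpow_mul_abs_mul_abs_eq h')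
  have hval := abs_eq_two_rpow_of_rpow_add_rpow_eq_one hp (habs ▸ hc : |c 0| ^ p + |c 0| ^ p = 1)
  exact Or.inr (Or.inr ⟨hval, habs ▸ hval⟩)

end TwoDim

/-- `card κ` pairwise disjoint nonempty sets in a type with at most `card κ + 1` elements: at
most one of them is not a singleton, and it then has two elements. A set `U` avoiding every
singleton among them is thus either tiny or contained in the exceptional one. -/
lemma Finset.card_le_one_or_exists_card_eq_two_subset {ι κ : Type*} [Fintype ι] [Fintype κ]
    [DecidableEq ι] (hcard : Fintype.card ι ≤ Fintype.card κ + 1) {s : κ → Finset ι}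
    (hdisj : Pairwise fun l l' => Disjoint (s l) (s l')) (hne : ∀ l, (s l).Nonempty) {U : Finset ι}
    (hU : ∀ l j, s l = {j} → j ∉ U) : U.card ≤ 1 ∨ ∃ l, (s l).card = 2 ∧ U ⊆ s l := by
  set V := Finset.univ.biUnion s
  have hV : V.card = ∑ l, ((s l).card - 1) + Fintype.card κ := by
    rw [Finset.card_biUnion fun l _ l' _ h => hdisj h, ← Finset.card_univ, Finset.card_eq_sum_ones,
      ← Finset.sum_add_distrib]
    exact Finset.sum_congr rfl fun l _ => (Nat.sub_add_cancel (hne l).card_pos).symm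
  have hexcess : ∑ l, ((s l).card - 1) ≤ 1 := by
    have := V.card_le_univ
    omega
  have hsingle : ∀ l, (s l).card = 1 → ∀ j ∈ s l, j ∉ U := fun l hl j hj => by
    obtain ⟨j', hj'⟩ := Finset.card_eq_one.1 hl
    rw [hj', Finset.mem_singleton] at hj
    exact hU l j (hj ▸ hj')
  by_cases h : ∃ l₀, 2 ≤ (s l₀).card
  · obtain ⟨l₀, hl₀⟩ := h
    have hle := Finset.single_le_sum (fun l _ => Nat.zero_le ((s l).card - 1))
      (Finset.mem_univ l₀)
    have hVuniv : V = Finset.univ := Finset.eq_univ_of_card V (by have := V.card_le_univ; omega)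
    refine Or.inr ⟨l₀, by omega, fun j hj => ?_⟩
    obtain ⟨l, -, hjl⟩ := Finset.mem_biUnion.1 (hVuniv ▸ Finset.mem_univ j : j ∈ V)
    by_contra hl
    have hll₀ : l ≠ l₀ := by rintro rfl; exact hl hjl
    have hpair := Finset.add_le_sum (fun l _ => Nat.zero_le ((s l).card - 1))
      (Finset.mem_univ l) (Finset.mem_univ l₀) hll₀
    have := (hne l).card_pos
    exact hsingle l (by omega) j hjl hj
  · push Not at h
    have hVc : Vᶜ.card ≤ 1 := by
      rw [Finset.card_compl]
      have : ∑ l, ((s l).card - 1) = 0 :=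
        Finset.sum_eq_zero fun l _ => by have := h l; omega
      omega
    refine Or.inl ((Finset.card_le_card fun j hj => Finset.mem_compl.2 fun hjV => ?_).trans hVc)
    obtain ⟨l, -, hjl⟩ := Finset.mem_biUnion.1 hjV
    exact hsingle l (by have := h l; have := (hne l).card_pos; omega) j hjl hj

lemma exists_apply_ne_zero_of_mem_span_image {κ ι : Type*} {v : κ → ι → ℝ} {T : Set κ}
    {w : ι → ℝ} (hw : w ∈ Submodule.span ℝ (v '' T)) {a : ι} (ha : w a ≠ 0) :
    ∃ k ∈ T, v k a ≠ 0 := by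
  by_contra! h
  have hle : Submodule.span ℝ (v '' T) ≤ LinearMap.ker (LinearMap.proj a) :=
    Submodule.span_le.2 (by rintro _ ⟨k, hk, rfl⟩; exact h k hk)
  exact ha (hle hw)

lemma exists_sign_mul_eq_of_abs_eq {ι : Type*} {u f : ι → ℝ} (h : ∀ j, |u j| = f j) :
    ∃ ε : ι → ℝ, (∀ j, ε j = 1 ∨ ε j = -1) ∧ ∀ j, u j = ε j * f j := by
  refine ⟨fun j => if u j < 0 then -1 else 1, fun j => by dsimp only; split_ifs <;> simp,
    fun j => ?_⟩
  rw [← h j]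
  dsimp only
  split_ifs with hj
  · rw [abs_of_neg hj]; ring
  · rw [abs_of_nonneg (not_lt.1 hj), one_mul]

lemma Equiv.Perm.exists_apply_eq_and_apply_eq {α : Type*} [DecidableEq α] {a b c d : α}
    (hab : a ≠ b) (hcd : c ≠ d) : ∃ σ : Equiv.Perm α, σ a = c ∧ σ b = d := by
  set τ := Equiv.swap a c
  have hτb : τ b ≠ c := fun h => hab (τ.injective (h.trans (Equiv.swap_apply_left a c).symm)).symm
  exact ⟨τ.trans (Equiv.swap (τ b) d), by simp [τ, Equiv.swap_apply_of_ne_of_ne hτb.symm hcd],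
    by simp⟩

lemma Fin.exists_perm_val_eq_zero_iff {n : ℕ} (j₀ : Fin n) :
    ∃ σ : Equiv.Perm (Fin n), ∀ j, (σ j : ℕ) = 0 ↔ j = j₀ := by
  refine ⟨Equiv.swap j₀ ⟨0, j₀.pos⟩, fun j => ?_⟩
  have hz : ∀ k : Fin n, (k : ℕ) = 0 ↔ k = ⟨0, j₀.pos⟩ := fun k => by simp [Fin.ext_iff]
  rw [hz, Equiv.swap_apply_eq_iff, Equiv.swap_apply_right]

lemma Fin.exists_perm_val_lt_two_iff {n : ℕ} {a b : Fin n} (hab : a ≠ b) :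
    ∃ σ : Equiv.Perm (Fin n), ∀ j, (σ j : ℕ) < 2 ↔ j = a ∨ j = b := by
  have hn : 2 ≤ n := Fin.nontrivial_iff_two_le.1 ⟨a, b, hab⟩
  obtain ⟨σ, hσa, hσb⟩ := Equiv.Perm.exists_apply_eq_and_apply_eq hab
    (show (⟨0, by omega⟩ : Fin n) ≠ ⟨1, by omega⟩ by simp)
  refine ⟨σ, fun j => ?_⟩
  rw [← σ.injective.eq_iff, ← σ.injective.eq_iff (b := b), hσa, hσb]
  simp only [Fin.ext_iff]
  omega

section Pnorm

variable {p : ℝ} {n m : ℕ}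

lemma pnorm_rpow (hp : 0 < p) (x : Fin n → ℝ) : pnorm p x ^ p = ∑ j, |x j| ^ p := by
  rw [pnorm, ← Real.rpow_mul (Finset.sum_nonneg fun j _ => by positivity),
    one_div_mul_cancel hp.ne', Real.rpow_one]

lemma sum_abs_rpow_eq_of_pnorm_eq (hp : 0 < p) {x : Fin n → ℝ} {y : Fin m → ℝ}
    (h : pnorm p x = pnorm p y) : ∑ j, |x j| ^ p = ∑ j, |y j| ^ p := by
  rw [← pnorm_rpow hp, ← pnorm_rpow hp, h]

lemma sum_abs_rpow_eq_one_of_pnorm_eq_one (hp : 0 < p) {x : Fin n → ℝ} (h : pnorm p x = 1) :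
    ∑ j, |x j| ^ p = 1 := by
  rw [← pnorm_rpow hp, h, Real.one_rpow]

lemma sum_abs_rpow_le_of_pnorm_le (hp : 0 < p) {x y : Fin n → ℝ} (h : pnorm p x ≤ pnorm p y) :
    ∑ j, |x j| ^ p ≤ ∑ j, |y j| ^ p := by
  rw [← pnorm_rpow hp, ← pnorm_rpow hp]
  exact Real.rpow_le_rpow (Real.rpow_nonneg (Finset.sum_nonneg fun j _ => by positivity) _) h
    hp.le

lemma abs_eq_one_of_sum_abs_rpow_eq_one {ι : Type*} [Fintype ι] (hp : 0 < p) {x : ι → ℝ}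
    {j₀ : ι} (hx : ∑ j, |x j| ^ p = 1) (h₀ : ∀ j, j ≠ j₀ → x j = 0) : |x j₀| = 1 := by
  rw [Finset.sum_eq_single j₀ (fun j _ hj => by simp [h₀ j hj, Real.zero_rpow hp.ne'])
    (by simp)] at hx
  rwa [← Real.rpow_left_inj (abs_nonneg _) zero_le_one hp.ne', Real.one_rpow]

end Pnorm

namespace IsAuerbach

variable {p : ℝ} {n : ℕ} {v : Fin n → Fin n → ℝ}

lemma sum_abs_rpow_eq_one (hv : IsAuerbach p v) (hp : 0 < p) (i : Fin n) :
    ∑ j, |v i j| ^ p = 1 :=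
  sum_abs_rpow_eq_one_of_pnorm_eq_one hp (hv.2 i).1

lemma sum_abs_rpow_le_add (hv : IsAuerbach p v) (hp : 0 < p) {i : Fin n} {w : Fin n → ℝ}
    (hw : w ∈ Submodule.span ℝ (v '' {j | j ≠ i})) :
    ∑ j, |v i j| ^ p ≤ ∑ j, |v i j + w j| ^ p :=
  sum_abs_rpow_le_of_pnorm_le hp ((hv.2 i).2 w hw)

lemma sum_abs_rpow_mul_mul_eq_zero (hv : IsAuerbach p v) (hp : 1 < p) {i : Fin n}
    {w : Fin n → ℝ} (hw : w ∈ Submodule.span ℝ (v '' {j | j ≠ i})) :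
    ∑ j, |v i j| ^ (p - 2) * v i j * w j = 0 :=
  _root_.sum_abs_rpow_mul_mul_eq_zero hp fun t =>
    hv.sum_abs_rpow_le_add (by linarith) (Submodule.smul_mem _ t hw)

lemma apply_eq_zero (hv : IsAuerbach p v) (hp : 1 < p) {i : Fin n} {w : Fin n → ℝ}
    (hw : w ∈ Submodule.span ℝ (v '' {j | j ≠ i})) {j₀ : Fin n} (hwj₀ : w j₀ ≠ 0)
    (hw₀ : ∀ j, j ≠ j₀ → w j = 0) : v i j₀ = 0 := by
  have h := hv.sum_abs_rpow_mul_mul_eq_zero hp hw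
  rw [Finset.sum_eq_single j₀ (fun j _ hj => by simp [hw₀ j hj]) (by simp)] at h
  by_contra hv₀
  exact hwj₀ (eq_zero_of_abs_rpow_mul_mul_eq_zero hv₀ h)

end IsAuerbach

lemma Pi.single_eq_smul_single_one {ι : Type*} [DecidableEq ι] (i : ι) (a : ℝ) :
    (Pi.single i a : ι → ℝ) = a • Pi.single i 1 := by
  rw [← Pi.single_smul', smul_eq_mul, mul_one]

lemma LinearMap.map_eq_sum_smul_map_single {m n : ℕ} (g : (Fin m → ℝ) →ₗ[ℝ] (Fin n → ℝ))
    (c : Fin m → ℝ) : g c = ∑ l, c l • g (Pi.single l 1) := by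
  conv_lhs => rw [← Finset.univ_sum_single c]
  refine (map_sum g _ _).trans (Finset.sum_congr rfl fun l _ => ?_)
  rw [Pi.single_eq_smul_single_one, map_smul]

section Isometry

variable {p : ℝ} {n m : ℕ} {g : (Fin m → ℝ) →ₗ[ℝ] (Fin n → ℝ)}

lemma sum_abs_rpow_map_single (hp : 0 < p) (hg : ∀ c, pnorm p (g c) = pnorm p c) (l : Fin m) :
    ∑ j, |g (Pi.single l 1) j| ^ p = 1 := by
  rw [sum_abs_rpow_eq_of_pnorm_eq hp (hg _), Finset.sum_eq_single l
    (fun j _ hj => by simp [hj, Real.zero_rpow hp.ne']) (by simp)]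
  simp

lemma map_single_mul_map_single_eq_zero (hp : 0 < p) (hp2 : p ≠ 2)
    (hg : ∀ c, pnorm p (g c) = pnorm p c) {l l' : Fin m} (hll' : l ≠ l') (j : Fin n) :
    g (Pi.single l 1) j * g (Pi.single l' 1) j = 0 := by
  refine mul_eq_zero_of_forall_sum_abs_rpow_eq hp hp2 (fun a b => ?_) j
  have hmap : ∀ j, a * g (Pi.single l 1) j + b * g (Pi.single l' 1) j =
      g (Pi.single l a + Pi.single l' b) j := fun j => by
    rw [Pi.single_eq_smul_single_one l a, Pi.single_eq_smul_single_one l' b, map_add, map_smul,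
      map_smul]
    rfl
  simp only [hmap]
  rw [sum_abs_rpow_eq_of_pnorm_eq hp (hg _),
    Fintype.sum_eq_add l l' hll' (fun j hj => by simp [hj.1, hj.2, Real.zero_rpow hp.ne'])]
  simp [hll', hll'.symm]

end Isometry

/-- The hypotheses force `x` and `y` to be supported at single points, one at `a` and one at
`b`. -/
lemma abs_eq_of_eq_smul_add_smul {ι : Type*} [Fintype ι] {p : ℝ} (hp : 0 < p)
    {x y : ι → ℝ} {α β c : ℝ} (hxy : ∀ j, x j * y j = 0) (hx : ∑ j, |x j| ^ p = 1)
    (hy : ∑ j, |y j| ^ p = 1) (hα : |α| = c) (hβ : |β| = c) (hc : c ≠ 0) {a b : ι}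
    (hu : ∀ j, j ≠ a → j ≠ b → α * x j + β * y j = 0) :
    |α * x a + β * y a| = c ∧ |α * x b + β * y b| = c := by
  wlog hxa : x a = 0 generalizing x y α β
  · have hya : y a = 0 := (mul_eq_zero.1 (hxy a)).resolve_left hxa
    have := this (fun j => by rw [mul_comm]; exact hxy j) hy hx hβ hα
      (fun j hja hjb => by rw [add_comm]; exact hu j hja hjb) hya
    simpa only [add_comm] using this
  have hα0 : α ≠ 0 := by rintro rfl; simp [← hα] at hc
  have hβ0 : β ≠ 0 := by rintro rfl; simp [← hβ] at hc
  have hoff : ∀ j, j ≠ a → j ≠ b → x j = 0 ∧ y j = 0 := fun j hja hjb => by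
    rcases mul_eq_zero.1 (hxy j) with h | h
    · simpa [h, hβ0] using hu j hja hjb
    · simpa [h, hα0] using hu j hja hjb
  have hxb : |x b| = 1 := abs_eq_one_of_sum_abs_rpow_eq_one hp hx fun j hjb => by
    by_cases hja : j = a
    · rwa [hja]
    · exact (hoff j hja hjb).1
  have hyb : y b = 0 := (mul_eq_zero.1 (hxy b)).resolve_left (by simp [← abs_ne_zero, hxb])
  have hya : |y a| = 1 := abs_eq_one_of_sum_abs_rpow_eq_one hp hy fun j hja => by
    by_cases hjb : j = b
    · rwa [hjb]
    · exact (hoff j hja hjb).2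
  simp [hxa, hyb, abs_mul, hxb, hya, hα, hβ]

namespace IsStrongAuerbach

variable {p : ℝ} {n : ℕ} {v : Fin n → Fin n → ℝ}

lemma exists_isometry (hv : IsStrongAuerbach p v) {S : Finset (Fin n)} {m : ℕ}
    (hS : S.card = m) : ∃ g : (Fin m → ℝ) →ₗ[ℝ] (Fin n → ℝ),
      (∀ c, pnorm p (g c) = pnorm p c) ∧ LinearMap.range g = Submodule.span ℝ (v '' ↑S) := by
  subst hS
  exact hv.2 S

/-- Here `x` and `y` are the images of the unit vectors under an isometry from `l^2_p` onto the
span of `v i` and `v k`. -/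
lemma mul_eq_zero_or_eq_smul_add_smul (hv : IsStrongAuerbach p v) (hp : 1 < p) (hp2 : p ≠ 2)
    {i k : Fin n} (hik : i ≠ k) :
    (∀ j, v i j * v k j = 0) ∨ ∃ (x y : Fin n → ℝ) (α β : ℝ), (∀ j, x j * y j = 0) ∧
      ∑ j, |x j| ^ p = 1 ∧ ∑ j, |y j| ^ p = 1 ∧ |α| = 2 ^ (-(1 / p)) ∧
        |β| = 2 ^ (-(1 / p)) ∧ v i = α • x + β • y := by
  have hp0 : 0 < p := by linarith
  obtain ⟨g, hg, hrange⟩ := hv.exists_isometry (S := {i, k}) (Finset.card_pair hik)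
  have hmem : ∀ l ∈ ({i, k} : Finset (Fin n)), v l ∈ LinearMap.range g := fun l hl =>
    hrange ▸ Submodule.subset_span ⟨l, hl, rfl⟩
  obtain ⟨c, hc⟩ := hmem i (by simp)
  obtain ⟨c', hc'⟩ := hmem k (by simp)
  have horth : ∀ {i₁ i₂ : Fin n} {d d' : Fin 2 → ℝ}, i₂ ≠ i₁ → g d = v i₁ → g d' = v i₂ →
      ∀ t : ℝ, ∑ l, |d l| ^ p ≤ ∑ l, |d l + t * d' l| ^ p := by
    intro i₁ i₂ d d' hi hd hd' t
    have hmin := hv.1.sum_abs_rpow_le_add hp0 (w := t • v i₂)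
      (Submodule.smul_mem _ t (Submodule.subset_span ⟨i₂, hi, rfl⟩))
    have hcomb : ∀ j, v i₁ j + (t • v i₂) j = g (d + t • d') j := fun j => by
      simp [← hd, ← hd']
    simp only [hcomb] at hmin
    rw [← hd, sum_abs_rpow_eq_of_pnorm_eq hp0 (hg _), sum_abs_rpow_eq_of_pnorm_eq hp0 (hg _)]
      at hmin
    simpa using hmin
  have hunit : ∀ {i₁ : Fin n} {d : Fin 2 → ℝ}, g d = v i₁ → ∑ l, |d l| ^ p = 1 := fun hd => by
    rw [← sum_abs_rpow_eq_of_pnorm_eq hp0 (hg _), hd, hv.1.sum_abs_rpow_eq_one hp0]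
  set x := g (Pi.single 0 1)
  set y := g (Pi.single 1 1)
  have hxy : ∀ j, x j * y j = 0 := map_single_mul_map_single_eq_zero hp0 hp2 hg zero_ne_one
  have hdec : ∀ d, g d = d 0 • x + d 1 • y := fun d => by
    rw [g.map_eq_sum_smul_map_single, Fin.sum_univ_two]
  rcases eq_zero_or_abs_eq_of_fin_two hp0.ne' hp2 (hunit hc) (hunit hc')
    (sum_abs_rpow_mul_mul_eq_zero hp (horth hik.symm hc hc'))
    (sum_abs_rpow_mul_mul_eq_zero hp (horth hik hc' hc)) with ⟨h0, h1'⟩ | ⟨h1, h0'⟩ | ⟨h0, h1⟩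
  · left
    intro j
    simp [← hc, ← hc', hdec, h0, h1', mul_mul_mul_comm _ (y j), mul_comm (y j), hxy]
  · left
    intro j
    simp [← hc, ← hc', hdec, h1, h0', mul_mul_mul_comm _ (x j), hxy]
  · exact Or.inr ⟨x, y, c 0, c 1, hxy, sum_abs_rpow_map_single hp0 hg 0,
      sum_abs_rpow_map_single hp0 hg 1, h0, h1, by rw [← hc, hdec]⟩

/-- The other basis vectors span an isometric copy of `l^{n-1}_p`, whose unit vectors `x l`
have disjoint supports (`p ≠ 2`); `v i` vanishes on every singleton support, and counting leaves
room for at most one doubleton support, which must then contain that of `v i`. -/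
lemma exists_eq_zero_off_single_or_pair (hv : IsStrongAuerbach p v) (hp : 1 < p) (hp2 : p ≠ 2)
    (i : Fin n) : (∃ j₀, ∀ j, j ≠ j₀ → v i j = 0) ∨
      ∃ a b, a ≠ b ∧ (∃ k, k ≠ i ∧ v k a ≠ 0) ∧ ∀ j, j ≠ a → j ≠ b → v i j = 0 := by
  classical
  have hp0 : 0 < p := by linarith
  obtain ⟨g, hg, hrange⟩ := hv.exists_isometry (S := Finset.univ.erase i) (m := n - 1)
    (by simp)
  set x : Fin (n - 1) → Fin n → ℝ := fun l => g (Pi.single l 1)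
  have hxW : ∀ l, x l ∈ Submodule.span ℝ (v '' {j | j ≠ i}) := fun l => by
    rw [show {j | j ≠ i} = ↑(Finset.univ.erase i) by ext; simp, ← hrange]
    exact ⟨_, rfl⟩
  set supp : Fin (n - 1) → Finset (Fin n) := fun l => Finset.univ.filter (x l · ≠ 0)
  have hmem : ∀ {l j}, j ∈ supp l ↔ x l j ≠ 0 := by simp [supp]
  have hdisj : Pairwise fun l l' => Disjoint (supp l) (supp l') := fun l l' hll' =>
    Finset.disjoint_filter.2 fun j _ hj hj' =>
      hj' ((mul_eq_zero.1 (map_single_mul_map_single_eq_zero hp0 hp2 hg hll' j)).resolve_left hj)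
  have hne : ∀ l, (supp l).Nonempty := fun l => by
    obtain ⟨j, hj⟩ : ∃ j, x l j ≠ 0 := by
      by_contra! h
      have : ∑ j, |x l j| ^ p = 1 := sum_abs_rpow_map_single hp0 hg l
      simp [h, Real.zero_rpow hp0.ne'] at this
    exact ⟨j, hmem.2 hj⟩
  set U := Finset.univ.filter (v i · ≠ 0)
  have hU : ∀ l j, supp l = {j} → j ∉ U := fun l j hl => by
    simpa [U] using hv.1.apply_eq_zero hp (hxW l) (hmem.1 (by simp [hl]))
      fun j' hj' => by simpa [hl, hj'] using (hmem (l := l) (j := j')).not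
  rcases Finset.card_le_one_or_exists_card_eq_two_subset (by simp; omega) hdisj hne hU with
    hU1 | ⟨l₀, hl₀, hUl₀⟩
  · have : Nonempty (Fin n) := ⟨i⟩
    obtain ⟨j₀, hj₀⟩ := Finset.card_le_one_iff_subset_singleton.1 hU1
    exact Or.inl ⟨j₀, fun j hj => by simpa [U, hj] using @hj₀ j⟩
  · obtain ⟨a, b, hab, hl₀ab⟩ := Finset.card_eq_two.1 hl₀
    obtain ⟨k, hk, hka⟩ := exists_apply_ne_zero_of_mem_span_image (hxW l₀)
      ((hmem (j := a)).1 (by simp [hl₀ab]))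
    exact Or.inr ⟨a, b, hab, ⟨k, hk, hka⟩, fun j hja hjb => by
      simpa [U, hl₀ab, hja, hjb] using @hUl₀ j⟩

lemma eq_zero_off_single_or_abs_eq (hv : IsStrongAuerbach p v) (hp : 1 < p) (hp2 : p ≠ 2)
    (i : Fin n) : (∃ j₀, ∀ j, j ≠ j₀ → v i j = 0) ∨
      ∃ a b, a ≠ b ∧ |v i a| = 2 ^ (-(1 / p)) ∧ |v i b| = 2 ^ (-(1 / p)) ∧
        ∀ j, j ≠ a → j ≠ b → v i j = 0 := by
  rcases hv.exists_eq_zero_off_single_or_pair hp hp2 i with h | ⟨a, b, hab, ⟨k, hki, hka⟩, h₀⟩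
  · exact Or.inl h
  by_cases ha : v i a = 0
  · exact Or.inl ⟨b, fun j hjb => by by_cases hja : j = a <;> simp_all⟩
  by_cases hb : v i b = 0
  · exact Or.inl ⟨a, fun j hja => by by_cases hjb : j = b <;> simp_all⟩
  rcases hv.mul_eq_zero_or_eq_smul_add_smul hp hp2 (Ne.symm hki) with hdisj |
    ⟨x, y, α, β, hxy, hx, hy, hα, hβ, hvi⟩
  · exact absurd (hdisj a) (mul_ne_zero ha hka)
  have hvi' : ∀ j, v i j = α * x j + β * y j := fun j => by simp [hvi]
  have habs := abs_eq_of_eq_smul_add_smul (by linarith) hxy hx hy hα hβ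
    (Real.rpow_pos_of_pos two_pos _).ne' (a := a) (b := b)
    fun j hja hjb => hvi' j ▸ h₀ j hja hjb
  exact Or.inr ⟨a, b, hab, hvi' a ▸ habs.1, hvi' b ▸ habs.2, h₀⟩

end IsStrongAuerbach

theorem stmt19_general {n : ℕ} (p : ℝ) (hp : 1 < p) (hp2 : p ≠ 2)
    (v : Fin n → Fin n → ℝ) (hv : IsStrongAuerbach p v) :
    ∀ i, ∃ (σ : Equiv.Perm (Fin n)) (ε : Fin n → ℝ), (∀ j, ε j = 1 ∨ ε j = -1) ∧
      ((∀ j, v i j = ε j * (if (σ j : ℕ) = 0 then 1 else 0)) ∨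
       (∀ j, v i j = ε j * (if (σ j : ℕ) < 2 then (2 : ℝ) ^ (-(1 / p)) else 0))) := by
  intro i
  have hp0 : 0 < p := by linarith
  rcases hv.eq_zero_off_single_or_abs_eq hp hp2 i with ⟨j₀, h₀⟩ | ⟨a, b, hab, ha, hb, h₀⟩
  · have h₁ := abs_eq_one_of_sum_abs_rpow_eq_one hp0 (hv.1.sum_abs_rpow_eq_one hp0 i) h₀
    obtain ⟨σ, hσ⟩ := Fin.exists_perm_val_eq_zero_iff j₀
    obtain ⟨ε, hε, hvε⟩ := exists_sign_mul_eq_of_abs_eq (u := v i)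
      (f := fun j => if (σ j : ℕ) = 0 then 1 else 0) fun j => by
        by_cases hj : j = j₀ <;> simp [hσ, hj, h₁, h₀]
    exact ⟨σ, ε, hε, Or.inl hvε⟩
  · obtain ⟨σ, hσ⟩ := Fin.exists_perm_val_lt_two_iff hab
    obtain ⟨ε, hε, hvε⟩ := exists_sign_mul_eq_of_abs_eq (u := v i)
      (f := fun j => if (σ j : ℕ) < 2 then (2 : ℝ) ^ (-(1 / p)) else 0) fun j => by
        by_cases hja : j = a
        · simp [hσ, hja, ha]
        by_cases hjb : j = b
        · simp [hσ, hjb, hb]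
        simp [hσ, hja, hjb, h₀]
    exact ⟨σ, ε, hε, Or.inr hvε⟩

/-- For `1 < p < ∞`, `p ≠ 2`, every member of a strong Auerbach basis of `l^n_p` equals, up
to a signed permutation of the components, `(1, 0, ..., 0)` or
`(2^{-1/p}, 2^{-1/p}, 0, ..., 0)`. -/
theorem stmt19 {n : ℕ} (hn : 2 ≤ n) (p : ℝ) (hp : 1 < p) (hp2 : p ≠ 2)
    (v : Fin n → Fin n → ℝ) (hv : IsStrongAuerbach p v) :
    ∀ i, ∃ (σ : Equiv.Perm (Fin n)) (ε : Fin n → ℝ), (∀ j, ε j = 1 ∨ ε j = -1) ∧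
      ((∀ j, v i j = ε j * (if (σ j : ℕ) = 0 then 1 else 0)) ∨
       (∀ j, v i j = ε j * (if (σ j : ℕ) < 2 then (2 : ℝ) ^ (-(1 / p)) else 0))) :=
  stmt19_general p hp hp2 v hv
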